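/- Let C = {C_1,…,C_k} be a clustering of a finite set X ⊆ ℝ^m with centers μ_i and radii r(C_i), satisfying the γ-margin property, and let ε ≥ 0 with γ ≥ 1 + 2ε. Suppose for every i ∈ [k] there is a point μ_i' ∈ ℝ^m with d(μ_i', μ_i) ≤ ε·r(C_i). Then the sets B_i = {x ∈ X : d(x, μ_i') ≤ (1+ε)·r(C_i)}, i ∈ [k], satisfy B_i = C_i for every i; in particular, the clustering C is exactly recovered from the approximate centers μ_1',…,μ_k' and the radii r(C_1),…,r(C_k). (This is the deterministic core of the recovery guarantee of the SSAC algorithm for weak oracles.) -/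

import Mathlib

open Finset
open scoped Classical

/-- The center (mean) of a finite cluster of points in Euclidean space. -/
noncomputable def ctr {m : ℕ} (C : Finset (EuclideanSpace ℝ (Fin m))) : EuclideanSpace ℝ (Fin m) :=
  (C.card : ℝ)⁻¹ • ∑ x ∈ C, x

/-- The radius of a cluster: the maximal distance of a member to the center. -/
noncomputable def rad {m : ℕ} (C : Finset (EuclideanSpace ℝ (Fin m))) : ℝ :=
  sSup ((fun x => dist x (ctr C)) '' (C : Set (EuclideanSpace ℝ (Fin m))))

/-- Confusion predicate for the (ν, ρ) local distance-weak oracle. -/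
def LocalConfused {m k : ℕ} (Cl : Fin k → Finset (EuclideanSpace ℝ (Fin m))) (ν ρ : ℝ)
    (x y : EuclideanSpace ℝ (Fin m)) : Prop :=
  (∃ i j, i ≠ j ∧ x ∈ Cl i ∧ y ∈ Cl j ∧
    dist x y < (ν - 1) * min (dist x (ctr (Cl i))) (dist y (ctr (Cl j)))) ∨
  (∃ i, x ∈ Cl i ∧ y ∈ Cl i ∧ 2 * ρ * rad (Cl i) < dist x y)

/-- Confusion predicate for the ρ global distance-weak oracle. -/
def GlobalConfused {m k : ℕ} (Cl : Fin k → Finset (EuclideanSpace ℝ (Fin m))) (ρ : ℝ)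
    (x y : EuclideanSpace ℝ (Fin m)) : Prop :=
  (∃ i j, i ≠ j ∧ x ∈ Cl i ∧ y ∈ Cl j ∧
    (ρ * rad (Cl i) < dist x (ctr (Cl i)) ∨ ρ * rad (Cl j) < dist y (ctr (Cl j)))) ∨
  (∃ i, x ∈ Cl i ∧ y ∈ Cl i ∧ 2 * ρ * rad (Cl i) < dist x y)

/-- Two points lie in the same cluster. -/
def SameCluster {m k : ℕ} (Cl : Fin k → Finset (EuclideanSpace ℝ (Fin m)))
    (x y : EuclideanSpace ℝ (Fin m)) : Prop :=
  ∃ i, x ∈ Cl i ∧ y ∈ Cl i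

/-- The truthful (ν, ρ) local distance-weak oracle: answers 0 on confused pairs,
1 on same-cluster non-confused pairs, and -1 on different-cluster non-confused pairs. -/
noncomputable def localQ {m k : ℕ} (Cl : Fin k → Finset (EuclideanSpace ℝ (Fin m))) (ν ρ : ℝ)
    (x y : EuclideanSpace ℝ (Fin m)) : ℤ :=
  if LocalConfused Cl ν ρ x y then 0 else if SameCluster Cl x y then 1 else -1

/-- The truthful ρ global distance-weak oracle. -/
noncomputable def globalQ {m k : ℕ} (Cl : Fin k → Finset (EuclideanSpace ℝ (Fin m))) (ρ : ℝ)
    (x y : EuclideanSpace ℝ (Fin m)) : ℤ :=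
  if GlobalConfused Cl ρ x y then 0 else if SameCluster Cl x y then 1 else -1

/-!
Write `r = r(C_i)`. A point of `C_i` is within `r + ε r` of `μ_i'` by the triangle inequality
through `μ_i`. A point outside `C_i` is, by the margin property applied to a point of `C_i` at
distance exactly `r` from `μ_i`, farther than `γ r ≥ (1 + 2ε) r` from `μ_i`, hence farther than
`(1 + ε) r` from `μ_i'`.
-/
theorem Finset.filter_dist_le_eq_of_margin {α : Type*} [PseudoMetricSpace α] {X C : Finset α}
    {c μ : α} {r γ ε : ℝ} (hCX : C ⊆ X) (hr : 0 ≤ r) (hC : ∀ x ∈ C, dist x c ≤ r)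
    (hmargin : ∀ y ∈ X, y ∉ C → γ * r < dist y c) (hγε : 1 + 2 * ε ≤ γ)
    (hμ : dist μ c ≤ ε * r) :
    X.filter (fun x => dist x μ ≤ (1 + ε) * r) = C := by
  ext y
  rw [mem_filter]
  constructor
  · rintro ⟨hyX, hy⟩
    by_contra hyC
    have hfar := hmargin y hyX hyC
    have := dist_triangle y μ c
    have := mul_le_mul_of_nonneg_right hγε hr
    linarith
  · intro hyC
    refine ⟨hCX hyC, ?_⟩
    calc dist y μ ≤ dist y c + dist μ c := dist_triangle_right y μ c
      _ ≤ r + ε * r := add_le_add (hC y hyC) hμ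
      _ = (1 + ε) * r := by ring

theorem dist_ctr_le_rad {m : ℕ} {C : Finset (EuclideanSpace ℝ (Fin m))}
    {x : EuclideanSpace ℝ (Fin m)} (hx : x ∈ C) : dist x (ctr C) ≤ rad C :=
  le_csSup (C.finite_toSet.image _).bddAbove ⟨x, hx, rfl⟩

theorem exists_dist_ctr_eq_rad {m : ℕ} {C : Finset (EuclideanSpace ℝ (Fin m))}
    (hC : C.Nonempty) : ∃ x ∈ C, dist x (ctr C) = rad C :=
  (hC.to_set.image _).csSup_mem (C.finite_toSet.image _)

theorem stmt13_general {m k : ℕ} (X : Finset (EuclideanSpace ℝ (Fin m)))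
    (Cl : Fin k → Finset (EuclideanSpace ℝ (Fin m)))
    (hsub : ∀ i, Cl i ⊆ X) (hne : ∀ i, (Cl i).Nonempty)
    (γ : ℝ)
    (hmargin : ∀ i, ∀ x ∈ Cl i, ∀ y ∈ X, y ∉ Cl i →
      γ * dist x (ctr (Cl i)) < dist y (ctr (Cl i)))
    (ε : ℝ) (hγε : 1 + 2 * ε ≤ γ)
    (μ' : Fin k → EuclideanSpace ℝ (Fin m))
    (hμ' : ∀ i, dist (μ' i) (ctr (Cl i)) ≤ ε * rad (Cl i)) :
    ∀ i, X.filter (fun x => dist x (μ' i) ≤ (1 + ε) * rad (Cl i)) = Cl i := by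
  intro i
  obtain ⟨x₀, hx₀, hx₀_rad⟩ := exists_dist_ctr_eq_rad (hne i)
  refine filter_dist_le_eq_of_margin (hsub i) (hx₀_rad ▸ dist_nonneg)
    (fun x hx => dist_ctr_le_rad hx) (fun y hyX hyC => ?_) hγε (hμ' i)
  simpa only [hx₀_rad] using hmargin i x₀ hx₀ y hyX hyC

/-- Under the γ-margin property with γ ≥ 1 + 2ε, if each approximate
center μ'_i satisfies d(μ'_i, μ_i) ≤ ε·r(C_i), then the balls
B_i = {x ∈ X : d(x, μ'_i) ≤ (1+ε)·r(C_i)} recover the clustering: B_i = C_i for all i. -/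
theorem stmt13 {m k : ℕ} (X : Finset (EuclideanSpace ℝ (Fin m)))
    (Cl : Fin k → Finset (EuclideanSpace ℝ (Fin m)))
    (hsub : ∀ i, Cl i ⊆ X) (hne : ∀ i, (Cl i).Nonempty)
    (hpart : ∀ x ∈ X, ∃! i, x ∈ Cl i)
    (γ : ℝ) (hγ : 1 ≤ γ)
    (hmargin : ∀ i, ∀ x ∈ Cl i, ∀ y ∈ X, y ∉ Cl i →
      γ * dist x (ctr (Cl i)) < dist y (ctr (Cl i)))
    (ε : ℝ) (hε : 0 ≤ ε) (hγε : 1 + 2 * ε ≤ γ)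
    (μ' : Fin k → EuclideanSpace ℝ (Fin m))
    (hμ' : ∀ i, dist (μ' i) (ctr (Cl i)) ≤ ε * rad (Cl i)) :
    ∀ i, X.filter (fun x => dist x (μ' i) ≤ (1 + ε) * rad (Cl i)) = Cl i :=
  stmt13_general X Cl hsub hne γ hmargin ε hγε μ' hμ'
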